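/- Let M be a subset of feature variables satisfying the Markov blanket property for C (C is conditionally independent of F \ M given M). Then for every subset S ⊆ F of the features, I(C; M) ≥ I(C; S); that is, M maximizes mutual information with C among all feature subsets. -/

import Mathlib

open Finset

namespace PaperFS

variable {Ω : Type} [Fintype Ω]

/-- The (marginal) probability mass of `X = x` under the weight function `p`. -/
noncomputable def pmfOf {α : Type} [DecidableEq α] (p : Ω → ℝ) (X : Ω → α) (x : α) : ℝ :=
  ∑ ω ∈ Finset.univ.filter (fun ω => X ω = x), p ω

/-- `p` is a probability mass function on the finite sample space `Ω`. -/
def IsPMF (p : Ω → ℝ) : Prop := (∀ ω, 0 ≤ p ω) ∧ ∑ ω, p ω = 1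

/-- Mutual information `I(X;Y)` of discrete random variables. -/
noncomputable def MI {α β : Type} [Fintype α] [Fintype β] [DecidableEq α] [DecidableEq β]
    (p : Ω → ℝ) (X : Ω → α) (Y : Ω → β) : ℝ :=
  ∑ x : α, ∑ y : β,
    pmfOf p (fun ω => (X ω, Y ω)) (x, y) *
      Real.log (pmfOf p (fun ω => (X ω, Y ω)) (x, y) / (pmfOf p X x * pmfOf p Y y))

/-- Conditional mutual information `I(X;Y|Z)` of discrete random variables. -/
noncomputable def CMI {α β γ : Type} [Fintype α] [Fintype β] [Fintype γ]
    [DecidableEq α] [DecidableEq β] [DecidableEq γ]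
    (p : Ω → ℝ) (X : Ω → α) (Y : Ω → β) (Z : Ω → γ) : ℝ :=
  ∑ z : γ, ∑ x : α, ∑ y : β,
    pmfOf p (fun ω => (X ω, Y ω, Z ω)) (x, y, z) *
      Real.log ((pmfOf p Z z * pmfOf p (fun ω => (X ω, Y ω, Z ω)) (x, y, z)) /
        (pmfOf p (fun ω => (X ω, Z ω)) (x, z) * pmfOf p (fun ω => (Y ω, Z ω)) (y, z)))

/-- Shannon entropy `H(X)`. -/
noncomputable def Ent {α : Type} [Fintype α] [DecidableEq α] (p : Ω → ℝ) (X : Ω → α) : ℝ :=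
  -∑ x : α, pmfOf p X x * Real.log (pmfOf p X x)

/-- Conditional entropy `H(X|Y) = H(X) - I(X;Y)`. -/
noncomputable def CEnt {α β : Type} [Fintype α] [Fintype β] [DecidableEq α] [DecidableEq β]
    (p : Ω → ℝ) (X : Ω → α) (Y : Ω → β) : ℝ :=
  Ent p X - MI p X Y

/-- `X` and `Y` are (marginally) independent: `P(x,y) = P(x)P(y)`. -/
def Indep {α β : Type} [DecidableEq α] [DecidableEq β]
    (p : Ω → ℝ) (X : Ω → α) (Y : Ω → β) : Prop :=
  ∀ x y, pmfOf p (fun ω => (X ω, Y ω)) (x, y) = pmfOf p X x * pmfOf p Y y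

/-- `X` and `Y` are conditionally independent given `Z`:
for every `z` with `P(z) > 0`, `P(x,y|z) = P(x|z)P(y|z)`, written multiplicatively. -/
def CondIndep {α β γ : Type} [DecidableEq α] [DecidableEq β] [DecidableEq γ]
    (p : Ω → ℝ) (X : Ω → α) (Y : Ω → β) (Z : Ω → γ) : Prop :=
  ∀ x y z, 0 < pmfOf p Z z →
    pmfOf p Z z * pmfOf p (fun ω => (X ω, Y ω, Z ω)) (x, y, z) =
      pmfOf p (fun ω => (X ω, Z ω)) (x, z) * pmfOf p (fun ω => (Y ω, Z ω)) (y, z)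

/-- The joint random variable formed by the features indexed by the finite set `S`. -/
def restrict {ι α : Type} (F : ι → Ω → α) (S : Finset ι) (ω : Ω) : {i // i ∈ S} → α :=
  fun i => F i.1 ω

end PaperFS

/-!
Split the features of `S` into those outside `M` and those in `M`: `restrict F S` is a function
of the pair `(restrict F (S \ M), restrict F M)`, so by the data-processing inequality (a fibrewise
application of the log-sum inequality) `I(C; S) ≤ I(C; (S \ M, M))`. Conditional independence of
`C` and `S \ M` given `M` makes each log term of `I(C; (S \ M, M))` equal to the corresponding
term of `I(C; M)`, and summing out `S \ M` gives `I(C; (S \ M, M)) = I(C; M)`.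
-/

namespace Real

theorem mul_log_sub_log_div_le {a b t : ℝ} (ha : 0 ≤ a) (hb : 0 ≤ b) (hab : b = 0 → a = 0)
    (ht : 0 < t) : a * (log t - log (a / b)) ≤ t * b - a := by
  rcases ha.eq_or_lt with rfl | ha
  · simpa using mul_nonneg ht.le hb
  have hb : 0 < b := hb.lt_of_ne fun h => ha.ne' (hab h.symm)
  calc a * (log t - log (a / b)) = a * log (t * b / a) := by
        rw [← log_div ht.ne' (by positivity)]
        congr 2
        field_simp
    _ ≤ a * (t * b / a - 1) := by gcongr; exact log_le_sub_one_of_pos (by positivity)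
    _ = t * b - a := by field_simp

theorem sum_mul_log_div_sum_le {ι : Type*} (s : Finset ι) {a b : ι → ℝ} (ha : ∀ i ∈ s, 0 ≤ a i)
    (hb : ∀ i ∈ s, 0 ≤ b i) (hab : ∀ i ∈ s, b i = 0 → a i = 0) :
    (∑ i ∈ s, a i) * log ((∑ i ∈ s, a i) / ∑ i ∈ s, b i) ≤
      ∑ i ∈ s, a i * log (a i / b i) := by
  rcases (Finset.sum_nonneg ha).eq_or_lt with hA | hA
  · have hz : ∀ i ∈ s, a i = 0 := (Finset.sum_eq_zero_iff_of_nonneg ha).1 hA.symm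
    rw [← hA, zero_mul]
    exact (Finset.sum_eq_zero fun i hi => by rw [hz i hi, zero_mul]).ge
  have hB : 0 < ∑ i ∈ s, b i := by
    refine (Finset.sum_nonneg hb).lt_of_ne fun hB => hA.ne' ?_
    have hz := (Finset.sum_eq_zero_iff_of_nonneg hb).1 hB.symm
    exact Finset.sum_eq_zero fun i hi => hab i hi (hz i hi)
  generalize hAdef : ∑ i ∈ s, a i = A at hA ⊢
  generalize hBdef : ∑ i ∈ s, b i = B at hB ⊢
  have key : ∑ i ∈ s, a i * (log (A / B) - log (a i / b i)) ≤
      ∑ i ∈ s, (A / B * b i - a i) :=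
    Finset.sum_le_sum fun i hi =>
      mul_log_sub_log_div_le (ha i hi) (hb i hi) (hab i hi) (by positivity)
  have hzero : ∑ i ∈ s, (A / B * b i - a i) = 0 := by
    rw [Finset.sum_sub_distrib, ← Finset.mul_sum, hAdef, hBdef]
    field_simp
    ring
  rw [hzero] at key
  simp only [mul_sub, Finset.sum_sub_distrib, ← Finset.sum_mul, hAdef] at key
  linarith

end Real

namespace PaperFS

theorem exists_restrict_eq_comp_sdiff {Ω ι α : Type} [DecidableEq ι] (F : ι → Ω → α)
    (S M : Finset ι) :
    ∃ f : ({i // i ∈ S \ M} → α) × ({i // i ∈ M} → α) → {i // i ∈ S} → α,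
      restrict F S = fun ω => f (restrict F (S \ M) ω, restrict F M ω) :=
  ⟨fun yz i => if h : i.1 ∈ M then yz.2 ⟨i.1, h⟩ else yz.1 ⟨i.1, mem_sdiff.2 ⟨i.2, h⟩⟩, by
    funext ω i
    by_cases h : i.1 ∈ M <;> simp [restrict, h]⟩

variable {Ω : Type} [Fintype Ω] {p : Ω → ℝ}

theorem pmfOf_nonneg {α : Type} [DecidableEq α] (hp : ∀ ω, 0 ≤ p ω) (X : Ω → α) (x : α) :
    0 ≤ pmfOf p X x :=
  Finset.sum_nonneg fun ω _ => hp ω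

theorem pmfOf_le_of_imp {α β : Type} [DecidableEq α] [DecidableEq β] (hp : ∀ ω, 0 ≤ p ω)
    {X : Ω → α} {Y : Ω → β} {x : α} {y : β} (h : ∀ ω, X ω = x → Y ω = y) :
    pmfOf p X x ≤ pmfOf p Y y :=
  Finset.sum_le_sum_of_subset_of_nonneg (fun ω hω => by simpa using h ω (by simpa using hω))
    fun ω _ _ => hp ω

theorem pmfOf_eq_zero_of_imp {α β : Type} [DecidableEq α] [DecidableEq β] (hp : ∀ ω, 0 ≤ p ω)
    {X : Ω → α} {Y : Ω → β} {x : α} {y : β} (h : ∀ ω, X ω = x → Y ω = y)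
    (hy : pmfOf p Y y = 0) : pmfOf p X x = 0 :=
  le_antisymm (hy ▸ pmfOf_le_of_imp hp h) (pmfOf_nonneg hp X x)

theorem pmfOf_pair_eq_zero_of_mul_eq_zero {α β : Type} [DecidableEq α] [DecidableEq β]
    (hp : ∀ ω, 0 ≤ p ω) {X : Ω → α} {Y : Ω → β} {x : α} {y : β}
    (h : pmfOf p X x * pmfOf p Y y = 0) : pmfOf p (fun ω => (X ω, Y ω)) (x, y) = 0 := by
  rcases mul_eq_zero.1 h with h | h
  · exact pmfOf_eq_zero_of_imp hp (fun ω hω => congrArg Prod.fst hω) h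
  · exact pmfOf_eq_zero_of_imp hp (fun ω hω => congrArg Prod.snd hω) h

theorem pmfOf_comp_eq_sum {α β : Type} [Fintype α] [DecidableEq α] [DecidableEq β]
    (X : Ω → α) (f : α → β) (b : β) :
    pmfOf p (fun ω => f (X ω)) b = ∑ a ∈ univ.filter (fun a => f a = b), pmfOf p X a := by
  unfold pmfOf
  rw [Finset.sum_fiberwise_eq_sum_filter]
  simp

theorem pmfOf_pair_comp_eq_sum {α β δ : Type} [Fintype α] [Fintype δ] [DecidableEq α]
    [DecidableEq β] [DecidableEq δ] (W : Ω → δ) (X : Ω → α) (f : α → β) (w : δ) (b : β) :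
    pmfOf p (fun ω => (W ω, f (X ω))) (w, b) =
      ∑ a ∈ univ.filter (fun a => f a = b), pmfOf p (fun ω => (W ω, X ω)) (w, a) := by
  refine (pmfOf_comp_eq_sum (fun ω => (W ω, X ω)) (fun a => (a.1, f a.2)) (w, b)).trans ?_
  rw [Finset.sum_filter, Fintype.sum_prod_type, Finset.sum_filter]
  simp [Prod.ext_iff, ite_and]

theorem sum_pmfOf_triple_eq_pmfOf_pair {α β δ : Type} [Fintype α] [Fintype β] [Fintype δ]
    [DecidableEq α] [DecidableEq β] [DecidableEq δ] (W : Ω → δ) (X : Ω → α) (Y : Ω → β)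
    (w : δ) (y : β) :
    ∑ x, pmfOf p (fun ω => (W ω, X ω, Y ω)) (w, x, y) = pmfOf p (fun ω => (W ω, Y ω)) (w, y) := by
  rw [pmfOf_pair_comp_eq_sum W (fun ω => (X ω, Y ω)) Prod.snd, Finset.sum_filter,
    Fintype.sum_prod_type]
  simp

section MutualInformation

variable {α β γ : Type} [DecidableEq α] [DecidableEq β] [DecidableEq γ]

theorem mul_log_eq_of_condIndep (hp : ∀ ω, 0 ≤ p ω) {X : Ω → γ} {Y : Ω → α} {Z : Ω → β}
    (h : CondIndep p X Y Z) (x : γ) (y : α) (z : β) :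
    pmfOf p (fun ω => (X ω, Y ω, Z ω)) (x, y, z) *
        Real.log (pmfOf p (fun ω => (X ω, Y ω, Z ω)) (x, y, z) /
          (pmfOf p X x * pmfOf p (fun ω => (Y ω, Z ω)) (y, z))) =
      pmfOf p (fun ω => (X ω, Y ω, Z ω)) (x, y, z) *
        Real.log (pmfOf p (fun ω => (X ω, Z ω)) (x, z) / (pmfOf p X x * pmfOf p Z z)) := by
  rcases (pmfOf_nonneg hp _ (x, y, z)).eq_or_lt with h0 | hxyz
  · rw [← h0, zero_mul, zero_mul]
  have hx : 0 < pmfOf p X x := hxyz.trans_le (pmfOf_le_of_imp hp fun ω hω => congrArg Prod.fst hω)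
  have hz : 0 < pmfOf p Z z :=
    hxyz.trans_le (pmfOf_le_of_imp hp fun ω hω => congrArg (fun t => t.2.2) hω)
  have hyz : 0 < pmfOf p (fun ω => (Y ω, Z ω)) (y, z) :=
    hxyz.trans_le (pmfOf_le_of_imp hp fun ω hω => congrArg Prod.snd hω)
  congr 2
  rw [div_eq_div_iff (by positivity) (by positivity)]
  linear_combination pmfOf p X x * h x y z hz

variable [Fintype α] [Fintype β] [Fintype γ]

theorem MI_comp_le (hp : ∀ ω, 0 ≤ p ω) (X : Ω → γ) (Y : Ω → α) (f : α → β) :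
    MI p X (fun ω => f (Y ω)) ≤ MI p X Y := by
  unfold MI
  refine Finset.sum_le_sum fun x _ => ?_
  rw [← Finset.sum_fiberwise Finset.univ f]
  refine Finset.sum_le_sum fun b _ => ?_
  have hjoint := pmfOf_pair_comp_eq_sum (p := p) X Y f x b
  have hprod : pmfOf p X x * pmfOf p (fun ω => f (Y ω)) b =
      ∑ a ∈ univ.filter (fun a => f a = b), pmfOf p X x * pmfOf p Y a := by
    rw [pmfOf_comp_eq_sum Y f b, Finset.mul_sum]
  rw [hjoint, hprod]
  exact Real.sum_mul_log_div_sum_le _ (fun _ _ => pmfOf_nonneg hp _ _)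
    (fun _ _ => mul_nonneg (pmfOf_nonneg hp _ _) (pmfOf_nonneg hp _ _))
    (fun _ _ h => pmfOf_pair_eq_zero_of_mul_eq_zero hp h)

theorem MI_pair_eq_of_condIndep (hp : ∀ ω, 0 ≤ p ω) {X : Ω → γ} {Y : Ω → α} {Z : Ω → β}
    (h : CondIndep p X Y Z) : MI p X (fun ω => (Y ω, Z ω)) = MI p X Z := by
  unfold MI
  refine Finset.sum_congr rfl fun x _ => ?_
  rw [Fintype.sum_prod_type, Finset.sum_comm]
  refine Finset.sum_congr rfl fun z _ => ?_
  simp_rw [mul_log_eq_of_condIndep hp h x _ z]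
  rw [← Finset.sum_mul, sum_pmfOf_triple_eq_pmfOf_pair]

end MutualInformation

end PaperFS

open PaperFS

/-- a Markov blanket `M` maximizes `I(C;·)` over all feature subsets. -/
theorem mb_maximizes_mi
    {Ω ι α γ : Type} [Fintype Ω] [Fintype ι] [DecidableEq ι]
    [Fintype α] [DecidableEq α] [Fintype γ] [DecidableEq γ]
    (p : Ω → ℝ) (hp : IsPMF p) (C : Ω → γ) (F : ι → Ω → α) (M : Finset ι)
    (hMB : ∀ S : Finset ι, S ⊆ Mᶜ → CondIndep p C (restrict F S) (restrict F M)) :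
    ∀ S : Finset ι, MI p C (restrict F S) ≤ MI p C (restrict F M) := by
  intro S
  obtain ⟨f, hf⟩ := exists_restrict_eq_comp_sdiff F S M
  have hCI : CondIndep p C (restrict F (S \ M)) (restrict F M) :=
    hMB (S \ M) fun i hi => mem_compl.2 (mem_sdiff.1 hi).2
  calc MI p C (restrict F S)
      ≤ MI p C (fun ω => (restrict F (S \ M) ω, restrict F M ω)) := hf ▸ MI_comp_le hp.1 C _ f
    _ = MI p C (restrict F M) := MI_pair_eq_of_condIndep hp.1 hCI
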